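/- Let V be a variety of algebras, B ∈ V, and μ, α congruences on B. If the free intersection [μ, α] (with respect to V) equals the trivial congruence ⊥, then α laxly centralizes μ with respect to V. -/

import Mathlib

/-!
Basic universal algebra: signatures, algebras, homomorphisms, congruences
(forming a complete lattice), generated congruences, images and preimages of
congruences, quotient algebras, subalgebras, products, ultraproducts,
varieties (classes closed under H, S, P), the term-condition commutator,
relatively free algebras, and lax centrality.
-/

universe u v

namespace UAlg

/-- A (finitary) signature: a type of operation symbols with arities. -/
structure Signature : Type (u + 1) where
  ops : Type u
  arity : ops → ℕ

/-- An algebra of signature `S`. -/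
structure Algebra (S : Signature.{u}) : Type (u + 1) where
  carrier : Type u
  interp : ∀ o : S.ops, (Fin (S.arity o) → carrier) → carrier

variable {S : Signature.{u}}

/-- A homomorphism of algebras. -/
structure Hom (A B : Algebra S) : Type u where
  toFun : A.carrier → B.carrier
  map_interp : ∀ (o : S.ops) (a : Fin (S.arity o) → A.carrier),
    toFun (A.interp o a) = B.interp o (fun i => toFun (a i))

/-- Composition of homomorphisms. -/
def Hom.comp {A B C : Algebra S} (g : Hom B C) (f : Hom A B) : Hom A C where
  toFun := g.toFun ∘ f.toFun
  map_interp o a := by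
    simp only [Function.comp, f.map_interp, g.map_interp]

/-- A congruence on an algebra: an equivalence relation compatible with the
operations. -/
structure Cong (A : Algebra S) : Type u where
  r : A.carrier → A.carrier → Prop
  iseqv : Equivalence r
  compat : ∀ (o : S.ops) (a b : Fin (S.arity o) → A.carrier),
    (∀ i, r (a i) (b i)) → r (A.interp o a) (A.interp o b)

namespace Cong

variable {A : Algebra S}

theorem ext {c d : Cong A} (h : ∀ x y, c.r x y ↔ d.r x y) : c = d := by
  cases c; cases d
  simp only [mk.injEq]
  funext x y
  exact propext (h x y)

instance : PartialOrder (Cong A) where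
  le c d := ∀ x y, c.r x y → d.r x y
  le_refl c := fun _ _ h => h
  le_trans a b c hab hbc := fun x y h => hbc x y (hab x y h)
  le_antisymm a b h1 h2 := ext fun x y => ⟨h1 x y, h2 x y⟩

instance : InfSet (Cong A) where
  sInf s :=
    { r := fun x y => ∀ c ∈ s, c.r x y
      iseqv :=
        ⟨fun x c _ => c.iseqv.refl x,
         fun h c hc => c.iseqv.symm (h c hc),
         fun h1 h2 c hc => c.iseqv.trans (h1 c hc) (h2 c hc)⟩
      compat := fun o a b h c hc => c.compat o a b fun i => h i c hc }

instance : CompleteLattice (Cong A) :=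
  completeLatticeOfInf _ (fun s =>
    ⟨fun c hc x y h => h c hc, fun _ hd x y h c hc => hd hc x y h⟩)

end Cong

/-- The congruence generated by a binary relation. -/
def conGen (A : Algebra S) (s : A.carrier → A.carrier → Prop) : Cong A :=
  sInf {c : Cong A | ∀ x y, s x y → c.r x y}

/-- The kernel congruence of a homomorphism. -/
def Hom.ker {A B : Algebra S} (f : Hom A B) : Cong A where
  r x y := f.toFun x = f.toFun y
  iseqv := ⟨fun _ => rfl, Eq.symm, Eq.trans⟩
  compat o a b h := by
    show f.toFun (A.interp o a) = f.toFun (A.interp o b)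
    rw [f.map_interp, f.map_interp]
    exact congrArg _ (funext h)

/-- `conMap f α` (written `→f α` in the paper) is the congruence of `B`
generated by the image `f(α)` of the congruence `α` of `A`. -/
def conMap {A B : Algebra S} (f : Hom A B) (α : Cong A) : Cong B :=
  conGen B (fun x y => ∃ a a', α.r a a' ∧ f.toFun a = x ∧ f.toFun a' = y)

/-- The inverse image `f⁻¹(β)` of a congruence. -/
def conComap {A B : Algebra S} (f : Hom A B) (β : Cong B) : Cong A where
  r x y := β.r (f.toFun x) (f.toFun y)
  iseqv :=
    ⟨fun _ => β.iseqv.refl _, fun h => β.iseqv.symm h,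
     fun h1 h2 => β.iseqv.trans h1 h2⟩
  compat o a b h := by
    show β.r (f.toFun (A.interp o a)) (f.toFun (A.interp o b))
    rw [f.map_interp, f.map_interp]
    exact β.compat o _ _ h

/-- The setoid underlying a congruence. -/
def Cong.toSetoid {A : Algebra S} (c : Cong A) : Setoid A.carrier :=
  ⟨c.r, c.iseqv⟩

/-- The quotient algebra of an algebra by a congruence. -/
noncomputable def quotAlg (A : Algebra S) (c : Cong A) : Algebra S where
  carrier := Quotient c.toSetoid
  interp o a := Quotient.mk c.toSetoid (A.interp o (fun i => (a i).out))

/-- The natural (quotient) homomorphism `A → A/c`. -/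
def natHom (A : Algebra S) (c : Cong A) : Hom A (quotAlg A c) where
  toFun := Quotient.mk c.toSetoid
  map_interp o a := by
    apply Quotient.sound
    apply c.compat
    intro i
    show c.r (a i) (Quotient.mk c.toSetoid (a i)).out
    exact Quotient.exact ((Quotient.out_eq (Quotient.mk c.toSetoid (a i))).symm)

/-- A subuniverse: a subset closed under the operations. -/
structure Subuniverse (A : Algebra S) : Type u where
  carrier : Set A.carrier
  closed : ∀ (o : S.ops) (a : Fin (S.arity o) → A.carrier),
    (∀ i, a i ∈ carrier) → A.interp o a ∈ carrier

/-- The subalgebra determined by a subuniverse. -/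
def Subuniverse.alg {A : Algebra S} (s : Subuniverse A) : Algebra S where
  carrier := {x // x ∈ s.carrier}
  interp o a := ⟨A.interp o (fun i => (a i).1), s.closed o _ (fun i => (a i).2)⟩

/-- The product of a family of algebras. -/
def prodAlg {ι : Type u} (A : ι → Algebra S) : Algebra S where
  carrier := ∀ i, (A i).carrier
  interp o a i := (A i).interp o (fun j => a j i)

/-- A variety: a class of algebras closed under homomorphic images,
subalgebras, and products. -/
structure IsVariety (V : Algebra S → Prop) : Prop where
  closed_hom : ∀ (A B : Algebra S) (f : Hom A B),
    Function.Surjective f.toFun → V A → V B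
  closed_sub : ∀ (A : Algebra S) (s : Subuniverse A), V A → V s.alg
  closed_prod : ∀ (ι : Type u) (A : ι → Algebra S), (∀ i, V (A i)) → V (prodAlg A)

/-- `α` laxly centralizes `μ` with respect to the class `V`. -/
def LaxCentralizes (V : Algebra S → Prop) (B : Algebra S) (μ α : Cong B) : Prop :=
  ∃ C : Algebra S, V C ∧ ∃ (π : Hom C B) (β γ : Cong C),
    Function.Surjective π.toFun ∧ μ ≤ conMap π β ∧ α ≤ conMap π γ ∧ β ⊓ γ = ⊥

/-- `B` is a homomorphic image of a member of `K`. -/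
def InH (K : Algebra S → Prop) (B : Algebra S) : Prop :=
  ∃ A, K A ∧ ∃ f : Hom A B, Function.Surjective f.toFun

/-- `B` embeds into a product of members of `K`, i.e. `B ∈ SP(K)`. -/
def InSP (K : Algebra S → Prop) (B : Algebra S) : Prop :=
  ∃ (ι : Type u) (A : ι → Algebra S), (∀ i, K (A i)) ∧
    ∃ f : Hom B (prodAlg A), Function.Injective f.toFun

/-- `B ∈ HSP(K)`: `B` is a homomorphic image of an algebra embeddable in a
product of members of `K`. -/
def InHSP (K : Algebra S → Prop) (B : Algebra S) : Prop :=
  ∃ C : Algebra S, InSP K C ∧ ∃ f : Hom C B, Function.Surjective f.toFun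

/-- The congruence on a product given by an ultrafilter on the index set. -/
def ultraCong {ι : Type u} (A : ι → Algebra S) (U : Ultrafilter ι) :
    Cong (prodAlg A) where
  r x y := {i | x i = y i} ∈ U
  iseqv := by
    refine ⟨fun x => ?_, fun {x y} h => ?_, fun {x y z} h1 h2 => ?_⟩
    · have : {i | x i = x i} = Set.univ := by ext i; simp
      rw [this]; exact Filter.univ_mem
    · have : {i | y i = x i} = {i | x i = y i} := by ext i; exact eq_comm
      rw [this]; exact h
    · refine Filter.mem_of_superset (Filter.inter_mem h1 h2) ?_
      intro i hi
      exact hi.1.trans hi.2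
  compat o a b h := by
    have h1 : (⋂ j, {i | a j i = b j i}) ∈ (U : Filter ι) :=
      (Filter.iInter_mem).2 h
    refine Filter.mem_of_superset h1 ?_
    intro i hi
    simp only [Set.mem_iInter, Set.mem_setOf_eq] at hi
    show (A i).interp o (fun j => a j i) = (A i).interp o (fun j => b j i)
    exact congrArg _ (funext hi)

/-- `B ∈ HSP_u(K)`: `B` is a homomorphic image of an algebra embeddable in an
ultraproduct of members of `K`. -/
def InHSPu (K : Algebra S → Prop) (B : Algebra S) : Prop :=
  ∃ (ι : Type u) (A : ι → Algebra S) (U : Ultrafilter ι), (∀ i, K (A i)) ∧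
    ∃ C : Algebra S,
      (∃ g : Hom C (quotAlg (prodAlg A) (ultraCong A U)),
        Function.Injective g.toFun) ∧
      ∃ f : Hom C B, Function.Surjective f.toFun

/-- `μ` is the monolith of `B`: the minimum nontrivial congruence.
In particular its existence means `B` is subdirectly irreducible. -/
def IsMonolith (B : Algebra S) (μ : Cong B) : Prop :=
  μ ≠ ⊥ ∧ ∀ θ : Cong B, θ ≠ ⊥ → μ ≤ θ

/-- Terms of signature `S` over a set `X` of variables. -/
inductive Tm (S : Signature.{u}) (X : Type v) : Type max u v where
  | var : X → Tm S X
  | app : (o : S.ops) → (Fin (S.arity o) → Tm S X) → Tm S X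

/-- Evaluation of a term in an algebra under an assignment of the variables. -/
def Tm.eval {X : Type v} (A : Algebra S) (v : X → A.carrier) :
    Tm S X → A.carrier
  | .var x => v x
  | .app o t => A.interp o (fun i => Tm.eval A v (t i))

/-- The (term-condition) centralizing relation `C(α, β; δ)`. -/
def Centralizes {A : Algebra S} (α β δ : Cong A) : Prop :=
  ∀ (n : ℕ) (t : Tm S (Unit ⊕ Fin n)) (a b : A.carrier)
    (c d : Fin n → A.carrier),
    α.r a b → (∀ i, β.r (c i) (d i)) →
    δ.r (t.eval A (Sum.elim (fun _ => a) c)) (t.eval A (Sum.elim (fun _ => a) d)) →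
    δ.r (t.eval A (Sum.elim (fun _ => b) c)) (t.eval A (Sum.elim (fun _ => b) d))

/-- The commutator `[α, β]`: the least congruence `δ` such that `α`
centralizes `β` modulo `δ` (the Freese–McKenzie commutator, which is the
modular commutator in congruence-modular varieties). -/
def commutator {A : Algebra S} (α β : Cong A) : Cong A :=
  sInf {δ : Cong A | Centralizes α β δ}

/-- The term algebra over a set of variables. -/
def termAlg (S : Signature.{u}) (X : Type u) : Algebra S :=
  ⟨Tm S X, Tm.app⟩

/-- The congruence of `V`-equations on the term algebra: two terms are related
iff they evaluate the same way in every member of `V`. -/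
def eqThy (V : Algebra S → Prop) (X : Type u) : Cong (termAlg S X) where
  r s t := ∀ A : Algebra S, V A → ∀ v : X → A.carrier, s.eval A v = t.eval A v
  iseqv :=
    ⟨fun _ _ _ _ => rfl, fun h A hA v => (h A hA v).symm,
     fun h1 h2 A hA v => (h1 A hA v).trans (h2 A hA v)⟩
  compat o a b h A hA v := by
    show Tm.eval A v (Tm.app o a) = Tm.eval A v (Tm.app o b)
    simp only [Tm.eval]
    exact congrArg _ (funext fun i => h i A hA v)

/-- The relatively free algebra of `V` on the set `X` of generators. -/
noncomputable def freeAlg (V : Algebra S → Prop) (X : Type u) : Algebra S :=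
  quotAlg (termAlg S X) (eqThy V X)

/-- The canonical generators of the relatively free algebra. -/
def freeGen (V : Algebra S → Prop) (X : Type u) (x : X) :
    (freeAlg V X).carrier :=
  Quotient.mk (eqThy V X).toSetoid (Tm.var x)

/-- The homomorphism from the relatively free algebra of `V` to an algebra
`B ∈ V` induced by an assignment of the generators. -/
def evalFreeHom (V : Algebra S → Prop) (X : Type u) (B : Algebra S)
    (hB : V B) (v : X → B.carrier) : Hom (freeAlg V X) B where
  toFun := Quotient.lift (fun t : Tm S X => t.eval B v) (fun s t h => h B hB v)
  map_interp o a := by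
    show Tm.eval B v (Tm.app o (fun i => (a i).out)) = _
    simp only [Tm.eval]
    congr 1
    funext i
    conv_rhs => rw [← Quotient.out_eq (a i)]
    rfl


/-- `ᾱ`: the congruence on the relatively free algebra of `V` over the
generators `{x_b, y_b : b ∈ B}` (with `x_b = inl b`, `y_b = inr b`) generated
by the pairs `(x_b, x_{b'})` with `b α b'`. -/
noncomputable def barX (V : Algebra S → Prop) (B : Algebra S) (α : Cong B) :
    Cong (freeAlg V (B.carrier ⊕ B.carrier)) :=
  conGen (freeAlg V (B.carrier ⊕ B.carrier)) (fun s t =>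
    ∃ b b' : B.carrier, α.r b b' ∧
      s = freeGen V (B.carrier ⊕ B.carrier) (Sum.inl b) ∧
      t = freeGen V (B.carrier ⊕ B.carrier) (Sum.inl b'))

/-- `β̄`: the congruence on the relatively free algebra of `V` over the
generators `{x_b, y_b : b ∈ B}` generated by the pairs `(y_b, y_{b'})` with
`b β b'`. -/
noncomputable def barY (V : Algebra S → Prop) (B : Algebra S) (β : Cong B) :
    Cong (freeAlg V (B.carrier ⊕ B.carrier)) :=
  conGen (freeAlg V (B.carrier ⊕ B.carrier)) (fun s t =>
    ∃ b b' : B.carrier, β.r b b' ∧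
      s = freeGen V (B.carrier ⊕ B.carrier) (Sum.inr b) ∧
      t = freeGen V (B.carrier ⊕ B.carrier) (Sum.inr b'))

/-- `ζ`: the homomorphism from the relatively free algebra of `V` on the
generators `{x_b, y_b : b ∈ B}` to `B` sending `x_b ↦ b` and `y_b ↦ b`. -/
noncomputable def zeta (V : Algebra S → Prop) (B : Algebra S) (hB : V B) :
    Hom (freeAlg V (B.carrier ⊕ B.carrier)) B :=
  evalFreeHom V (B.carrier ⊕ B.carrier) B hB (Sum.elim id id)

/-- The free intersection `[μ, α]` of congruences `μ`, `α` on `B ∈ V` with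
respect to `V`: the congruence `→ζ (μ̄ ∧ ᾱ)` of `B`, where `μ̄`, `ᾱ` are the
congruences on the relatively free algebra generated by the `μ`-pairs of
`x`-generators and the `α`-pairs of `y`-generators, respectively. -/
noncomputable def freeIntersection {B : Algebra S} (V : Algebra S → Prop)
    (hB : V B) (μ α : Cong B) : Cong B :=
  conMap (zeta V B hB) (barX V B μ ⊓ barY V B α)

def Hom.id (A : Algebra S) : Hom A A where
  toFun := fun a => a
  map_interp _ _ := rfl

def evalHom {X : Type u} (A : Algebra S) (v : X → A.carrier) : Hom (termAlg S X) A where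
  toFun := Tm.eval A v
  map_interp _ _ := rfl

def Hom.pi {ι : Type u} {A : Algebra S} {B : ι → Algebra S} (f : ∀ i, Hom A (B i)) :
    Hom A (prodAlg B) where
  toFun a i := (f i).toFun a
  map_interp o a := funext fun i => (f i).map_interp o a

def Hom.quotLift {A B : Algebra S} (f : Hom A B) (c : Cong A) (hc : c ≤ f.ker) :
    Hom (quotAlg A c) B where
  toFun := Quotient.lift f.toFun hc
  map_interp o a := by
    show f.toFun (A.interp o fun i => (a i).out) = _
    rw [f.map_interp]
    congr 1
    funext i
    conv_rhs => rw [← Quotient.out_eq (a i)]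
    rfl

def Hom.range {A B : Algebra S} (f : Hom A B) : Subuniverse B where
  carrier := Set.range f.toFun
  closed o b hb := by
    choose a ha using hb
    exact ⟨A.interp o a, by rw [f.map_interp]; exact congrArg _ (funext ha)⟩

namespace Cong

variable {A : Algebra S}

theorem inf_r_iff {c d : Cong A} {x y : A.carrier} :
    (c ⊓ d).r x y ↔ c.r x y ∧ d.r x y := by
  refine ⟨fun h => ⟨(inf_le_left : c ⊓ d ≤ c) x y h, (inf_le_right : c ⊓ d ≤ d) x y h⟩, ?_⟩
  rintro ⟨hc, hd⟩ e (rfl | rfl)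
  exacts [hc, hd]

theorem bot_r_iff {x y : A.carrier} : (⊥ : Cong A).r x y ↔ x = y := by
  refine ⟨fun h => (bot_le : ⊥ ≤ (Hom.id A).ker) x y h, ?_⟩
  rintro rfl
  exact (⊥ : Cong A).iseqv.refl x

end Cong

theorem conGen_r {A : Algebra S} {s : A.carrier → A.carrier → Prop} {x y : A.carrier}
    (h : s x y) : (conGen A s).r x y :=
  fun _ hc => hc x y h

theorem conMap_r_apply {A B : Algebra S} (f : Hom A B) {α : Cong A} {a a' : A.carrier}
    (h : α.r a a') : (conMap f α).r (f.toFun a) (f.toFun a') :=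
  conGen_r ⟨a, a', h, rfl, rfl⟩

theorem le_ker_of_conMap_eq_bot {A B : Algebra S} {f : Hom A B} {α : Cong A}
    (h : conMap f α = ⊥) : α ≤ f.ker := fun _ _ ha =>
  Cong.bot_r_iff.1 (h ▸ conMap_r_apply f ha)

theorem ker_natHom (A : Algebra S) (c : Cong A) : (natHom A c).ker = c :=
  Cong.ext fun _ _ => ⟨Quotient.exact, @Quotient.sound _ c.toSetoid _ _⟩

theorem natHom_surjective (A : Algebra S) (c : Cong A) :
    Function.Surjective (natHom A c).toFun :=
  Quotient.mk_surjective

theorem Hom.quotLift_surjective {A B : Algebra S} {f : Hom A B} {c : Cong A}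
    (hc : c ≤ f.ker) (hf : Function.Surjective f.toFun) :
    Function.Surjective (f.quotLift c hc).toFun := fun b =>
  let ⟨a, ha⟩ := hf b
  ⟨Quotient.mk _ a, ha⟩

theorem Hom.quotLift_injective {A B : Algebra S} {f : Hom A B} {c : Cong A}
    (hc : c ≤ f.ker) (hker : f.ker ≤ c) : Function.Injective (f.quotLift c hc).toFun := by
  rintro ⟨a⟩ ⟨a'⟩ h
  exact Quotient.sound (hker a a' h)

/-- The congruence `d / c` on `A / c`. -/
noncomputable def Cong.quot {A : Algebra S} (d : Cong A) {c : Cong A} (h : c ≤ d) :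
    Cong (quotAlg A c) :=
  ((natHom A d).quotLift c (h.trans (ker_natHom A d).ge)).ker

namespace Cong

variable {A : Algebra S} {c d e : Cong A}

theorem quot_r_mk (h : c ≤ d) {x y : A.carrier} :
    (d.quot h).r (Quotient.mk _ x) (Quotient.mk _ y) ↔ d.r x y :=
  ⟨Quotient.exact, @Quotient.sound _ d.toSetoid _ _⟩

theorem quot_inf_quot (hd : c ≤ d) (he : c ≤ e) :
    d.quot hd ⊓ e.quot he = (d ⊓ e).quot (le_inf hd he) := by
  refine Cong.ext fun p q => ?_
  induction p using Quotient.ind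
  induction q using Quotient.ind
  exact inf_r_iff.trans ((and_congr (quot_r_mk hd) (quot_r_mk he)).trans
    (inf_r_iff.symm.trans (quot_r_mk _).symm))

theorem quot_self : c.quot le_rfl = ⊥ := by
  refine Cong.ext fun p q => ?_
  induction p using Quotient.ind
  induction q using Quotient.ind
  exact (quot_r_mk le_rfl).trans
    (bot_r_iff.trans ⟨Quotient.exact, @Quotient.sound _ c.toSetoid _ _⟩).symm

end Cong

namespace IsVariety

variable {V : Algebra S → Prop}

theorem quot (hV : IsVariety V) {A : Algebra S} (hA : V A) (c : Cong A) :
    V (quotAlg A c) :=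
  hV.closed_hom _ _ (natHom A c) (natHom_surjective A c) hA

theorem of_injective (hV : IsVariety V) {A B : Algebra S} (f : Hom A B)
    (hf : Function.Injective f.toFun) (hB : V B) : V A := by
  let g : Hom f.range.alg A :=
    { toFun := fun b => Classical.choose b.2
      map_interp := fun o b => hf <| by
        rw [Classical.choose_spec (f.range.alg.interp o b).2, f.map_interp]
        exact congrArg _ (funext fun i => (Classical.choose_spec (b i).2).symm) }
  have hg : Function.Surjective g.toFun := fun a =>
    ⟨⟨f.toFun a, a, rfl⟩, hf (Classical.choose_spec (⟨a, rfl⟩ : ∃ a', f.toFun a' = f.toFun a))⟩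
  exact hV.closed_hom _ _ g hg (hV.closed_sub B f.range hB)

theorem quot_ker (hV : IsVariety V) {A B : Algebra S} (f : Hom A B) (hB : V B) :
    V (quotAlg A f.ker) :=
  hV.of_injective _ (Hom.quotLift_injective le_rfl le_rfl) hB

end IsVariety

theorem Tm.eval_hom {X : Type u} {A B : Algebra S} (f : Hom A B) (v : X → A.carrier) :
    ∀ t : Tm S X, f.toFun (t.eval A v) = t.eval B (fun x => f.toFun (v x))
  | .var _ => rfl
  | .app o a => by
    show f.toFun (A.interp o fun i => (a i).eval A v) = B.interp o fun i => (a i).eval B _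
    rw [f.map_interp]
    exact congrArg _ (funext fun i => eval_hom f v (a i))

theorem Tm.eval_var {X : Type u} : ∀ t : Tm S X, t.eval (termAlg S X) Tm.var = t
  | .var _ => rfl
  | .app o a => congrArg (Tm.app o) (funext fun i => eval_var (a i))

theorem eqThy_le {V : Algebra S → Prop} {X : Type u} {c : Cong (termAlg S X)}
    (hc : V (quotAlg (termAlg S X) c)) : eqThy V X ≤ c := by
  intro s t h
  have eval_mk : ∀ w : Tm S X,
      w.eval (quotAlg _ c) (fun x => (natHom _ c).toFun (Tm.var x)) = (natHom _ c).toFun w :=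
    fun w => (Tm.eval_hom (natHom (termAlg S X) c) Tm.var w).symm.trans
      (congrArg (natHom (termAlg S X) c).toFun (Tm.eval_var w))
  exact Quotient.exact ((eval_mk s).symm.trans ((h _ hc _).trans (eval_mk t)))

/-- The relatively free algebra embeds into the product of all quotients of the
term algebra that lie in `V`, and belongs to `V` for that reason. -/
theorem freeAlg_mem {V : Algebra S → Prop} (hV : IsVariety V) (X : Type u) :
    V (freeAlg V X) := by
  let I := {c : Cong (termAlg S X) // V (quotAlg (termAlg S X) c)}
  let p : Hom (termAlg S X) (prodAlg fun i : I => quotAlg (termAlg S X) i.1) :=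
    Hom.pi fun i => natHom _ i.1
  have hle : eqThy V X ≤ p.ker := fun s t h =>
    funext fun i => Quotient.sound (eqThy_le i.2 s t h)
  have hge : p.ker ≤ eqThy V X := fun s t h A hA v =>
    Quotient.exact (congrFun h ⟨(evalHom A v).ker, hV.quot_ker (evalHom A v) hA⟩)
  exact hV.of_injective (p.quotLift _ hle) (Hom.quotLift_injective hle hge)
    (hV.closed_prod _ _ fun i => i.2)

theorem barX_r_freeGen {V : Algebra S → Prop} {B : Algebra S} {μ : Cong B}
    {b b' : B.carrier} (h : μ.r b b') :
    (barX V B μ).r (freeGen V _ (Sum.inl b)) (freeGen V _ (Sum.inl b')) :=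
  conGen_r ⟨b, b', h, rfl, rfl⟩

theorem barY_r_freeGen {V : Algebra S → Prop} {B : Algebra S} {α : Cong B}
    {b b' : B.carrier} (h : α.r b b') :
    (barY V B α).r (freeGen V _ (Sum.inr b)) (freeGen V _ (Sum.inr b')) :=
  conGen_r ⟨b, b', h, rfl, rfl⟩

theorem zeta_surjective (V : Algebra S → Prop) (B : Algebra S) (hB : V B) :
    Function.Surjective (zeta V B hB).toFun := fun b =>
  ⟨freeGen V _ (Sum.inl b), rfl⟩

/-- The witness is `C = F / (μ̄ ∧ ᾱ)`, with `β = μ̄ / (μ̄ ∧ ᾱ)` and `γ = ᾱ / (μ̄ ∧ ᾱ)`;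
the hypothesis says exactly that `ζ` factors through `C`. -/
theorem laxCentralizes_of_freeIntersection_eq_bot {V : Algebra S → Prop}
    (hV : IsVariety V) {B : Algebra S} (hB : V B) (μ α : Cong B)
    (h : freeIntersection V hB μ α = ⊥) :
    LaxCentralizes V B μ α := by
  have hker : barX V B μ ⊓ barY V B α ≤ (zeta V B hB).ker := le_ker_of_conMap_eq_bot h
  refine ⟨_, hV.quot (freeAlg_mem hV _) _, (zeta V B hB).quotLift _ hker,
    (barX V B μ).quot inf_le_left, (barY V B α).quot inf_le_right,
    Hom.quotLift_surjective hker (zeta_surjective V B hB), ?_, ?_, ?_⟩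
  · exact fun b b' hb => conMap_r_apply _ ((Cong.quot_r_mk _).2 (barX_r_freeGen hb))
  · exact fun b b' hb => conMap_r_apply _ ((Cong.quot_r_mk _).2 (barY_r_freeGen hb))
  · rw [Cong.quot_inf_quot, Cong.quot_self]

end UAlg
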